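/- Quantitative strict decrease of the partition function in the drift parameter (key lemma for the discrimination theorem): for every A > 0 there exists c > 0, depending only on a, V_R, V_F and A, such that for all real α, β with −A ≤ α ≤ β ≤ A one has Z(α) − Z(β) ≥ c (β − α). -/

import Mathlib

open MeasureTheory Real Set Filter

/-- The partition function with drift parameter `s`:
`Z(s) = ∫_{v ≤ V_F} ∫_{max(V_R,v)}^{V_F} exp((v'−v)(v'+v−2s)/(2a)) dv' dv`. -/
noncomputable def Z1 (a VR VF s : ℝ) : ℝ :=
  ∫ v in Set.Iic VF, ∫ v' in Set.Icc (max VR v) VF,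
    Real.exp ((v' - v) * (v' + v - 2 * s) / (2 * a))

/-! Write `g_s(v, w)` for the integrand. Since `g_α = g_β · exp ((w - v)(β - α) / a)`, the bound
`exp x ≥ 1 + x` gives `g_α - g_β ≥ g_β · (w - v)(β - α) / a`, which is nonnegative for `v ≤ w`.
On the box `v ∈ [V_R, V_R + δ]`, `w ∈ [V_F - δ, V_F]` with `δ = (V_F - V_R) / 3` we have
`w - v ≥ δ`, and by compactness `g_β` is bounded below there by some `m > 0` uniformly in
`|β| ≤ A`; integrating over the box yields `c = m δ³ / a`. The inner integral is integrable in `v`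
because `g_s(v, w)` factors as a function of `w` times a Gaussian in `v`. -/

section

variable {X : Type*} [MeasurableSpace X] {μ : Measure X} {f : X → ℝ} {s t : Set X} {c : ℝ}

theorem mul_measureReal_le_setIntegral_of_subset (hs : MeasurableSet s) (ht : MeasurableSet t)
    (hts : t ⊆ s) (hμt : μ t ≠ ⊤) (hf : IntegrableOn f s μ) (hf0 : ∀ x ∈ s, 0 ≤ f x)
    (hc : ∀ x ∈ t, c ≤ f x) : c * μ.real t ≤ ∫ x in s, f x ∂μ :=
  (setIntegral_ge_of_const_le_real ht hμt hc (hf.mono_set hts)).trans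
    (setIntegral_mono_set hf (ae_restrict_of_forall_mem hs hf0) hts.eventuallyLE)

end

noncomputable def driftKernel (a s v w : ℝ) : ℝ :=
  exp ((w - v) * (w + v - 2 * s) / (2 * a))

noncomputable def innerZ1 (a VR VF s v : ℝ) : ℝ :=
  ∫ w in Icc (max VR v) VF, driftKernel a s v w

theorem Z1_eq_integral_innerZ1 (a VR VF s : ℝ) :
    Z1 a VR VF s = ∫ v in Iic VF, innerZ1 a VR VF s v := rfl

theorem continuous_driftKernel (a : ℝ) :
    Continuous fun p : ℝ × ℝ × ℝ => driftKernel a p.1 p.2.1 p.2.2 := by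
  unfold driftKernel; fun_prop

theorem driftKernel_pos (a s v w : ℝ) : 0 < driftKernel a s v w := exp_pos _

theorem continuous_driftKernel_right (a s v : ℝ) : Continuous (driftKernel a s v) := by
  unfold driftKernel; fun_prop

theorem driftKernel_eq_mul (a s v w : ℝ) :
    driftKernel a s v w =
      exp ((w ^ 2 - 2 * s * w) / (2 * a)) * exp (-(v ^ 2 - 2 * s * v) / (2 * a)) := by
  rw [driftKernel, ← exp_add]; congr 1; ring

theorem driftKernel_mul_sub_le (a α β v w : ℝ) :
    driftKernel a β v w * ((w - v) * (β - α) / a) ≤ driftKernel a α v w - driftKernel a β v w := by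
  have hshift : driftKernel a α v w = driftKernel a β v w * exp ((w - v) * (β - α) / a) := by
    rw [driftKernel, driftKernel, ← exp_add]; congr 1; ring
  have := mul_le_mul_of_nonneg_left (add_one_le_exp ((w - v) * (β - α) / a))
    (driftKernel_pos a β v w).le
  rw [hshift]
  linarith

theorem driftKernel_antitone {a : ℝ} (ha : 0 < a) {α β v w : ℝ} (hvw : v ≤ w) (hαβ : α ≤ β) :
    driftKernel a β v w ≤ driftKernel a α v w := by
  have : 0 ≤ driftKernel a β v w * ((w - v) * (β - α) / a) :=
    mul_nonneg (driftKernel_pos a β v w).le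
      (div_nonneg (mul_nonneg (sub_nonneg.2 hvw) (sub_nonneg.2 hαβ)) ha.le)
  linarith [driftKernel_mul_sub_le a α β v w]

theorem innerZ1_sub_innerZ1 (a VR VF α β v : ℝ) :
    innerZ1 a VR VF α v - innerZ1 a VR VF β v =
      ∫ w in Icc (max VR v) VF, (driftKernel a α v w - driftKernel a β v w) :=
  (integral_sub (continuous_driftKernel_right a α v).integrableOn_Icc
    (continuous_driftKernel_right a β v).integrableOn_Icc).symm

theorem innerZ1_le_innerZ1 {a : ℝ} (ha : 0 < a) (VR VF : ℝ) {α β : ℝ} (hαβ : α ≤ β) (v : ℝ) :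
    innerZ1 a VR VF β v ≤ innerZ1 a VR VF α v := by
  rw [← sub_nonneg, innerZ1_sub_innerZ1]
  exact setIntegral_nonneg measurableSet_Icc fun w hw =>
    sub_nonneg.2 (driftKernel_antitone ha ((le_max_right _ _).trans hw.1) hαβ)

theorem integrable_exp_neg_quadratic {a : ℝ} (ha : 0 < a) (s : ℝ) :
    Integrable fun v : ℝ => exp (-(v ^ 2 - 2 * s * v) / (2 * a)) := by
  have h := ((integrable_exp_neg_mul_sq (b := 1 / (2 * a)) (by positivity)).comp_sub_right
    s).const_mul (exp (s ^ 2 / (2 * a)))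
  refine h.congr (ae_of_all _ fun v => ?_)
  simp only [← exp_add]
  congr 1
  field_simp
  ring

theorem integrable_innerZ1 {a : ℝ} (ha : 0 < a) (VR VF s : ℝ) : Integrable (innerZ1 a VR VF s) := by
  set f : ℝ → ℝ := fun w => exp ((w ^ 2 - 2 * s * w) / (2 * a))
  set G : ℝ → ℝ := fun v => ∫ w in Icc (max VR v) VF, f w
  have hf : Continuous f := by fun_prop
  have hf0 : ∀ w, 0 ≤ f w := fun w => (exp_pos _).le
  have hG_anti : Antitone G := fun v w hvw =>
    setIntegral_mono_set hf.integrableOn_Icc (ae_of_all _ fun _ => hf0 _)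
      (Icc_subset_Icc (max_le_max_left VR hvw) le_rfl).eventuallyLE
  have hG_bound : ∀ v, ‖G v‖ ≤ ∫ w in Icc VR VF, f w := by
    intro v
    rw [Real.norm_of_nonneg (setIntegral_nonneg measurableSet_Icc fun w _ => hf0 w)]
    exact setIntegral_mono_set hf.integrableOn_Icc (ae_of_all _ fun _ => hf0 _)
      (Icc_subset_Icc (le_max_left VR v) le_rfl).eventuallyLE
  refine ((integrable_exp_neg_quadratic ha s).bdd_mul hG_anti.measurable.aestronglyMeasurable
    (ae_of_all _ hG_bound)).congr (ae_of_all _ fun v => ?_)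
  simp only [G, f, innerZ1, driftKernel_eq_mul, integral_mul_const]

theorem exists_pos_le_driftKernel (a A L U : ℝ) :
    ∃ m > 0, ∀ s ∈ Icc (-A) A, ∀ v ∈ Icc L U, ∀ w ∈ Icc L U, m ≤ driftKernel a s v w := by
  obtain ⟨m, hm, hle⟩ := (isCompact_Icc.prod (isCompact_Icc.prod isCompact_Icc)).exists_forall_le'
    (continuous_driftKernel a).continuousOn (a := 0) fun p _ => exp_pos _
  exact ⟨m, hm, fun s hs v hv w hw => hle (s, v, w) ⟨hs, hv, hw⟩⟩

theorem mul_le_driftKernel_sub {a m δ α β v w : ℝ} (ha : 0 < a) (hαβ : α ≤ β) (hδ : 0 ≤ δ)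
    (hm : m ≤ driftKernel a β v w) (hδvw : δ ≤ w - v) :
    m * (δ / a) * (β - α) ≤ driftKernel a α v w - driftKernel a β v w := by
  have hβα : 0 ≤ β - α := sub_nonneg.2 hαβ
  have hδa : δ / a ≤ (w - v) / a := by gcongr
  calc m * (δ / a) * (β - α)
      ≤ driftKernel a β v w * ((w - v) / a) * (β - α) := by
        gcongr
        exact (driftKernel_pos a β v w).le
    _ = driftKernel a β v w * ((w - v) * (β - α) / a) := by ring
    _ ≤ _ := driftKernel_mul_sub_le a α β v w

theorem mul_le_innerZ1_sub {a VR VF α β v δ κ : ℝ} (ha : 0 < a) (hαβ : α ≤ β) (hδ : 0 ≤ δ)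
    (hv : VR ≤ v) (hvF : v ≤ VF - δ)
    (hκ : ∀ w ∈ Icc (VF - δ) VF, κ ≤ driftKernel a α v w - driftKernel a β v w) :
    κ * δ ≤ innerZ1 a VR VF α v - innerZ1 a VR VF β v := by
  rw [innerZ1_sub_innerZ1, max_eq_right hv]
  have := mul_measureReal_le_setIntegral_of_subset (μ := volume) measurableSet_Icc
    measurableSet_Icc (Icc_subset_Icc hvF le_rfl) measure_Icc_lt_top.ne
    ((continuous_driftKernel_right a α v).sub (continuous_driftKernel_right a β v)).integrableOn_Icc
    (fun w hw => sub_nonneg.2 (driftKernel_antitone ha hw.1 hαβ)) hκ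
  rwa [Real.volume_real_Icc_of_le (by linarith), sub_sub_cancel] at this

theorem mul_le_Z1_sub {a VR VF α β L U κ : ℝ} (ha : 0 < a) (hαβ : α ≤ β) (hLU : L ≤ U)
    (hUF : U ≤ VF) (hκ : ∀ v ∈ Icc L U, κ ≤ innerZ1 a VR VF α v - innerZ1 a VR VF β v) :
    κ * (U - L) ≤ Z1 a VR VF α - Z1 a VR VF β := by
  have hα := (integrable_innerZ1 ha VR VF α).integrableOn (s := Iic VF)
  have hβ := (integrable_innerZ1 ha VR VF β).integrableOn (s := Iic VF)
  rw [Z1_eq_integral_innerZ1, Z1_eq_integral_innerZ1, ← integral_sub hα hβ,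
    ← Real.volume_real_Icc_of_le hLU]
  exact mul_measureReal_le_setIntegral_of_subset measurableSet_Iic measurableSet_Icc
    (fun v hv => mem_Iic.2 (hv.2.trans hUF)) measure_Icc_lt_top.ne (hα.sub hβ)
    (fun v _ => sub_nonneg.2 (innerZ1_le_innerZ1 ha VR VF hαβ v)) hκ

/-- Quantitative strict decrease of the partition function in the drift parameter
(key lemma for the discrimination Theorem 5.1). -/
theorem stmt14 (a VR VF : ℝ) (ha : 0 < a) (hV : VR < VF) :
    ∀ A : ℝ, 0 < A → ∃ c > 0, ∀ α β : ℝ, -A ≤ α → α ≤ β → β ≤ A →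
      c * (β - α) ≤ Z1 a VR VF α - Z1 a VR VF β := by
  intro A _
  set δ := (VF - VR) / 3 with hδ_def
  have hδ : 0 < δ := by positivity
  have hVF : VF = VR + 3 * δ := by rw [hδ_def]; ring
  obtain ⟨m, hm, hm_le⟩ := exists_pos_le_driftKernel a A VR VF
  refine ⟨m * (δ / a) * δ * δ, by positivity, fun α β hα hαβ hβ => ?_⟩
  have hbox := mul_le_Z1_sub (L := VR) (U := VR + δ) ha hαβ (by linarith) (by linarith)
    fun v hv => mul_le_innerZ1_sub ha hαβ hδ.le hv.1 (by linarith [hv.2]) fun w hw =>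
      mul_le_driftKernel_sub ha hαβ hδ.le
        (hm_le β ⟨by linarith, hβ⟩ v ⟨hv.1, by linarith [hv.2]⟩ w ⟨by linarith [hw.1], hw.2⟩)
        (by linarith [hv.2, hw.1])
  calc m * (δ / a) * δ * δ * (β - α) = m * (δ / a) * (β - α) * δ * (VR + δ - VR) := by ring
    _ ≤ _ := hbox
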